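/- For the function f(δ, τ) = (1 + exp(δ/τ))^{-1}, there exists k > 0 (namely k = a*/(2 + e^{a*} + e^{−a*}) where a* is the unique positive zero of 2 + e^{a}(1−a) + e^{−a}(1+a)) such that |∂f/∂τ (δ, τ)| ≤ k/τ for all δ ∈ ℝ and τ > 0, with the maximum over δ > 0 attained at δ = a*τ. -/

import Mathlib

/-!
Write `a = δ / τ`; then `∂f/∂τ = g(a) / τ` with `g(a) = a / (2 + eᵃ + e⁻ᵃ)`, an odd function,
so everything reduces to `g a ≤ g a*` for all real `a`. Replacing `eᵃ` and `e⁻ᵃ` by their tangent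
lines at `a*` gives `a* (2 + eᵃ + e⁻ᵃ) ≥ a a* (e^{a*} - e^{-a*})`, and the equation defining `a*`
says precisely that `a* (e^{a*} - e^{-a*}) = 2 + e^{a*} + e^{-a*}`.
-/

open Real

noncomputable def acceptTempSlope (a : ℝ) : ℝ := a / (2 + exp a + exp (-a))

lemma acceptTempSlope_neg (a : ℝ) : acceptTempSlope (-a) = -acceptTempSlope a := by
  rw [acceptTempSlope, acceptTempSlope, neg_neg, neg_div, add_right_comm]

lemma exp_tangent_le (a b : ℝ) : exp b * (1 + (a - b)) ≤ exp a :=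
  calc exp b * (1 + (a - b)) ≤ exp b * exp (a - b) := by
        gcongr; linarith [add_one_le_exp (a - b)]
    _ = exp a := by rw [← exp_add, add_sub_cancel]

lemma acceptTempSlope_le_of_crit {b : ℝ} (hb : 0 ≤ b)
    (hcrit : 2 + exp b * (1 - b) + exp (-b) * (1 + b) = 0) (a : ℝ) :
    acceptTempSlope a ≤ acceptTempSlope b := by
  have hup := mul_le_mul_of_nonneg_left (exp_tangent_le a b) hb
  have hdown := mul_le_mul_of_nonneg_left (exp_tangent_le (-a) (-b)) hb
  unfold acceptTempSlope
  rw [div_le_div_iff₀ (by positivity) (by positivity)]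
  linear_combination hup + hdown + (a - b) * hcrit

lemma abs_acceptTempSlope_le_of_crit {b : ℝ} (hb : 0 ≤ b)
    (hcrit : 2 + exp b * (1 - b) + exp (-b) * (1 + b) = 0) (a : ℝ) :
    |acceptTempSlope a| ≤ acceptTempSlope b :=
  abs_le.mpr ⟨by linarith [acceptTempSlope_le_of_crit hb hcrit (-a), acceptTempSlope_neg a],
    acceptTempSlope_le_of_crit hb hcrit a⟩

lemma hasDerivAt_acceptance_temp (δ : ℝ) {τ : ℝ} (hτ : τ ≠ 0) :
    HasDerivAt (fun t : ℝ => (1 + exp (δ / t))⁻¹) (acceptTempSlope (δ / τ) / τ) τ := by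
  have hinner : HasDerivAt (fun t : ℝ => 1 + exp (δ / t)) (exp (δ / τ) * (δ * -(τ ^ 2)⁻¹)) τ := by
    simpa [div_eq_mul_inv] using (((hasDerivAt_inv hτ).const_mul δ).exp).const_add 1
  refine (hinner.inv (by positivity)).congr_deriv ?_
  have hexp : exp (δ / τ) * exp (-(δ / τ)) = 1 := by rw [← exp_add, add_neg_cancel, exp_zero]
  have hsq : (1 + exp (δ / τ)) ^ 2 = exp (δ / τ) * (2 + exp (δ / τ) + exp (-(δ / τ))) := by
    linear_combination -hexp
  have hpos : 0 < 2 + exp (δ / τ) + exp (-(δ / τ)) := by positivity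
  rw [hsq, acceptTempSlope]
  field_simp

theorem stmt_16 (astar : ℝ) (hastar : 0 < astar)
    (hzero : 2 + Real.exp astar * (1 - astar) + Real.exp (-astar) * (1 + astar) = 0) :
    0 < astar / (2 + Real.exp astar + Real.exp (-astar)) ∧
    (∀ δ τ : ℝ, 0 < τ →
      |deriv (fun t : ℝ => (1 + Real.exp (δ / t))⁻¹) τ| ≤
        (astar / (2 + Real.exp astar + Real.exp (-astar))) / τ) ∧
    (∀ τ : ℝ, 0 < τ → ∀ δ > (0:ℝ),
      deriv (fun t : ℝ => (1 + Real.exp (δ / t))⁻¹) τ ≤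
        deriv (fun t : ℝ => (1 + Real.exp (astar * τ / t))⁻¹) τ) := by
  refine ⟨by positivity, fun δ τ hτ => ?_, fun τ hτ δ _ => ?_⟩
  · rw [(hasDerivAt_acceptance_temp δ hτ.ne').deriv, abs_div, abs_of_pos hτ]
    exact div_le_div_of_nonneg_right (abs_acceptTempSlope_le_of_crit hastar.le hzero _) hτ.le
  · rw [(hasDerivAt_acceptance_temp δ hτ.ne').deriv,
      (hasDerivAt_acceptance_temp (astar * τ) hτ.ne').deriv, mul_div_cancel_right₀ _ hτ.ne']
    exact div_le_div_of_nonneg_right (acceptTempSlope_le_of_crit hastar.le hzero _) hτ.le
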